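/- Selective ultrafilters are Rudin-Keisler minimal among nonprincipal ultrafilters: if U is a selective ultrafilter on ω and V = f(U) for some f : ω → ω, then either V is principal or V is isomorphic to U via a bijection. -/

import Mathlib

/-!
Selectivity gives `X ∈ U` on which `f` is constant or injective. If constant, `f(U)` is principal.
If injective, shrink `X` to `A ∈ U` so that both `A` and `f '' A` have infinite complements
(intersect with the evens or the odds, and with the preimage under `f` of one of them);
then `f` restricted to `A` extends to a bijection of `ℕ`, which maps `U` to `f(U)` because it
agrees with `f` on a set in `U`.
-/

open Set

namespace Ultrafilter

variable {α β : Type*}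

theorem map_eq_pure_of_eventually_eq {U : Ultrafilter α} {f : α → β} {b : β}
    (h : ∀ᶠ x in U, f x = b) : U.map f = pure b :=
  eq_of_le (Filter.le_pure_iff.2 h)

theorem map_congr {U : Ultrafilter α} {f g : α → β} (h : f =ᶠ[U] g) : U.map f = U.map g :=
  coe_injective (Filter.map_congr h)

theorem exists_mem_infinite_compl (U : Ultrafilter ℕ) : ∃ A ∈ U, Aᶜ.Infinite := by
  have hEven : {n : ℕ | Even n}.Infinite :=
    infinite_of_forall_exists_gt fun a => ⟨2 * a + 2, by simp [parity_simps], by omega⟩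
  have hOdd : {n : ℕ | Even n}ᶜ.Infinite :=
    infinite_of_forall_exists_gt fun a => ⟨2 * a + 1, by simp [parity_simps], by omega⟩
  by_cases h : {n : ℕ | Even n} ∈ U
  · exact ⟨_, h, hOdd⟩
  · exact ⟨_, compl_mem_iff_notMem.2 h, by rwa [compl_compl]⟩

end Ultrafilter

theorem Set.InjOn.exists_equiv_eqOn {α β : Type*} [Countable α] [Countable β] {f : α → β}
    {A : Set α} (hf : InjOn f A) (hA : Aᶜ.Infinite) (hfA : (f '' A)ᶜ.Infinite) :
    ∃ e : α ≃ β, EqOn e f A := by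
  classical
  have := hA.to_subtype
  have := hfA.to_subtype
  obtain ⟨e'⟩ : Nonempty (↥Aᶜ ≃ ↥(f '' A)ᶜ) := nonempty_equiv_of_countable
  refine ⟨(Equiv.Set.sumCompl A).symm.trans
    (((Equiv.Set.imageOfInjOn f A hf).sumCongr e').trans (Equiv.Set.sumCompl (f '' A))),
    fun x hx => ?_⟩
  simp [Equiv.Set.sumCompl_symm_apply_of_mem hx, Equiv.Set.imageOfInjOn]

theorem stmt_9_general (U : Ultrafilter ℕ)
    (hsel : ∀ f : ℕ → ℕ, ∃ X ∈ U, (∀ x ∈ X, ∀ y ∈ X, f x = f y) ∨ Set.InjOn f X)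
    (V : Ultrafilter ℕ) (f : ℕ → ℕ) (hV : V = U.map f) :
    (∃ a : ℕ, V = pure a) ∨ (∃ h : ℕ ≃ ℕ, U.map h = V) := by
  subst hV
  obtain ⟨X, hXU, hconst | hinj⟩ := hsel f
  · obtain ⟨x₀, hx₀⟩ := U.nonempty_of_mem hXU
    exact .inl ⟨f x₀, U.map_eq_pure_of_eventually_eq
      (Filter.mem_of_superset hXU fun x hx => hconst x hx x₀ hx₀)⟩
  · obtain ⟨A₁, hA₁U, hA₁⟩ := U.exists_mem_infinite_compl
    obtain ⟨A₂, hA₂V, hA₂⟩ := (U.map f).exists_mem_infinite_compl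
    set A := X ∩ A₁ ∩ f ⁻¹' A₂
    have hAU : A ∈ U := Filter.inter_mem (Filter.inter_mem hXU hA₁U) hA₂V
    have hAc : Aᶜ.Infinite := hA₁.mono (compl_subset_compl.2 fun x hx => hx.1.2)
    have hfAc : (f '' A)ᶜ.Infinite :=
      hA₂.mono (compl_subset_compl.2 (image_subset_iff.2 fun x hx => hx.2))
    obtain ⟨e, he⟩ := (hinj.mono fun x hx => hx.1.1).exists_equiv_eqOn hAc hfAc
    exact .inr ⟨e, Ultrafilter.map_congr (Filter.mem_of_superset hAU he)⟩

/-- Selective ultrafilters are Rudin-Keisler minimal among nonprincipal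
ultrafilters. -/
theorem stmt_9 (U : Ultrafilter ℕ) (hU : ∀ a : ℕ, U ≠ pure a)
    (hsel : ∀ f : ℕ → ℕ, ∃ X ∈ U, (∀ x ∈ X, ∀ y ∈ X, f x = f y) ∨ Set.InjOn f X)
    (V : Ultrafilter ℕ) (f : ℕ → ℕ) (hV : V = U.map f) :
    (∃ a : ℕ, V = pure a) ∨ (∃ h : ℕ ≃ ℕ, U.map h = V) :=
  stmt_9_general U hsel V f hV
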